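/- (q,b)-Cassini formula: F_{n-1}(x,qb,qs,q)·F_{n+1}(x,b,s,q) − F_n(x,b,s,q)·F_n(x,qb,qs,q) = (−1)^n·q^{n(n-1)/2}·s^{n-1}/((qb;q)_{n-1}·(q²b;q)_{n-1}) for all n ≥ 1, where F_n are the (q,b)-Fibonacci polynomials. -/

import Mathlib

open Finset

noncomputable section

/-- The field `ℚ(q,b,s,x)` of rational functions. -/
abbrev K : Type := FractionRing (MvPolynomial (Fin 4) ℚ)

def q : K := algebraMap (MvPolynomial (Fin 4) ℚ) K (MvPolynomial.X 0)
def b : K := algebraMap (MvPolynomial (Fin 4) ℚ) K (MvPolynomial.X 1)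
def s : K := algebraMap (MvPolynomial (Fin 4) ℚ) K (MvPolynomial.X 2)
def x : K := algebraMap (MvPolynomial (Fin 4) ℚ) K (MvPolynomial.X 3)

/-- The q-Pochhammer symbol `(a;q)_n = ∏_{j=0}^{n-1} (1 - q^j a)`. -/
def qPoch (a : K) (n : ℕ) : K := ∏ j ∈ range n, (1 - q ^ j * a)

/-- The (q,b)-Fibonacci polynomials `F n b s`, defined by `F 0 = 0`, `F 1 = 1` and the
parameter-shifting recursion (2.8). -/
def qbFib : ℕ → K → K → K
  | 0, _, _ => 0
  | 1, _, _ => 1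
  | (n + 2), b, s =>
      x * qbFib (n + 1) (q * b) (q * s) +
        (q * s / ((1 - q * b) * (1 - q ^ 2 * b))) * qbFib n (q ^ 2 * b) (q ^ 2 * s)

/-!
Expanding `F_{k+3}(B,S)` and `F_{k+2}(B,S)` by the recursion, the `x`-terms cancel and the
Cassini determinant at `(B,S)` becomes `-qS/((1-qB)(1-q²B))` times the determinant of one
index lower at `(qB,qS)`. Iterating down to `F_0, F_1, F_2` gives the product formula. Since
`(uv)⁻¹ = u⁻¹v⁻¹` holds in a field even when `u` or `v` is `0`, no Pochhammer factor needs to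
be nonzero.
-/

lemma qPoch_succ (a : K) (n : ℕ) : qPoch a (n + 1) = (1 - a) * qPoch (q * a) n := by
  rw [qPoch, prod_range_succ', pow_zero, one_mul, mul_comm, qPoch]
  congr 1
  exact prod_congr rfl fun j _ => by ring

lemma qbFib_add_two (n : ℕ) (B S : K) :
    qbFib (n + 2) B S =
      x * qbFib (n + 1) (q * B) (q * S) +
        (q * S / ((1 - q * B) * (1 - q ^ 2 * B))) * qbFib n (q ^ 2 * B) (q ^ 2 * S) :=
  rfl

def qbCassini (k : ℕ) (B S : K) : K :=
  qbFib k (q * B) (q * S) * qbFib (k + 2) B S - qbFib (k + 1) B S * qbFib (k + 1) (q * B) (q * S)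

lemma qbCassini_succ (k : ℕ) (B S : K) :
    qbCassini (k + 1) B S =
      -(q * S / ((1 - q * B) * (1 - q ^ 2 * B))) * qbCassini k (q * B) (q * S) := by
  rw [qbCassini, qbCassini, qbFib_add_two (k + 1) B S, qbFib_add_two k B S]
  ring_nf

lemma qbCassini_eq (k : ℕ) (B S : K) :
    qbCassini k B S =
      (-1) ^ (k + 1) * q ^ ((k + 1) * k / 2) * S ^ k /
        (qPoch (q * B) k * qPoch (q ^ 2 * B) k) := by
  induction k generalizing B S with
  | zero => simp [qbCassini, qbFib, qPoch]
  | succ k ih =>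
    have hexp : (k + 2) * (k + 1) / 2 = (k + 1) * k / 2 + (k + 1) := by
      rw [show (k + 2) * (k + 1) = (k + 1) * k + 2 * (k + 1) by ring,
        Nat.add_mul_div_left _ _ two_pos]
    rw [qbCassini_succ, ih, qPoch_succ (q * B), qPoch_succ (q ^ 2 * B), hexp]
    simp only [div_eq_mul_inv, mul_inv]
    ring_nf

/-- (q,b)-Cassini formula. -/
theorem qbFib_cassini (n : ℕ) (hn : 1 ≤ n) :
    qbFib (n - 1) (q * b) (q * s) * qbFib (n + 1) b s -
        qbFib n b s * qbFib n (q * b) (q * s) =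
      (-1) ^ n * q ^ (n * (n - 1) / 2) * s ^ (n - 1) /
        (qPoch (q * b) (n - 1) * qPoch (q ^ 2 * b) (n - 1)) := by
  obtain ⟨k, rfl⟩ : ∃ k, n = k + 1 := ⟨n - 1, by omega⟩
  rw [Nat.add_sub_cancel]
  exact qbCassini_eq k b s

end
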